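/- Combining the two bounds J(t,x,h) ≤ 4h + Γ(1/2)x(x+h)/h and J(t,x,h) ≤ 2h/x + h²√t/(x(x+h)) yields: there exists C_T > 0 such that for all 0 < x, 0 < h with x, x+h ≤ 1 and t ∈ (0,T], J(t,x,h) ≤ C_T h^{1/3} (using the first bound when x ≤ h^{2/3} and the second when x > h^{2/3}). -/

import Mathlib

open MeasureTheory Real

noncomputable def J (t x h : ℝ) : ℝ :=
  ∫ s in Set.Ioc (0:ℝ) t, Real.sqrt s *
    ((1 - Real.exp (-x ^ 2 / s)) / x ^ 2 +
     (1 - Real.exp (-(x + h) ^ 2 / s)) / (x + h) ^ 2 -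
     2 * Real.exp (-h ^ 2 / (4 * s)) * (1 - Real.exp (-(x * (x + h)) / s)) / (x * (x + h)))

/-!
With `ψ u = (1 - e^{-u}) / u` (`expQuot`), the integrand of `J` is `s^{-1/2} (ψ a + ψ b - 2 E ψ c)` where
`a = x²/s ≤ c = x(x+h)/s ≤ b = (x+h)²/s` and `E = e^{-h²/(4s)}`. Since `ψ` is decreasing with values
in `[0, 1]`, this is at most `s^{-1/2} ((ψ a - ψ c) + 2 (1 - E))`. Now `ψ a - ψ c` is bounded by `1`,
by `(c - a)/2 = xh/(2s)` (as `ψ' ≥ -1/2`) and by `1/a - 1/c ≤ sh/x³`; the geometric mean with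
weights `2/3, 1/4, 1/12` eliminates `x` and gives `h^{1/3} s^{-1/6}`. Likewise
`1 - E ≤ min(1, h²/(4s)) ≤ h^{1/3} s^{-1/6}`. Hence the integrand is at most `3 h^{1/3} s^{-2/3}`,
whose integral over `(0, t]` is `9 t^{1/3} h^{1/3}`; no case distinction between `x ≤ h^{2/3}` and
`x > h^{2/3}` is needed.
-/

open Set

lemma one_sub_exp_neg_nonneg {u : ℝ} (hu : 0 ≤ u) : 0 ≤ 1 - exp (-u) :=
  sub_nonneg.mpr (exp_le_one_iff.mpr (neg_nonpos.mpr hu))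

lemma one_sub_exp_neg_le (u : ℝ) : 1 - exp (-u) ≤ u :=
  sub_le_comm.mp (one_sub_le_exp_neg u)

lemma one_sub_sq_div_two_le_add_one_mul_exp_neg {u : ℝ} (hu : 0 ≤ u) :
    1 - u ^ 2 / 2 ≤ (1 + u) * exp (-u) := by
  have hderiv (v : ℝ) : HasDerivAt (fun v => (1 + v) * exp (-v) + v ^ 2 / 2)
      (v * (1 - exp (-v))) v := by
    refine ((((hasDerivAt_id v).const_add 1).mul (hasDerivAt_neg v).exp).add
      ((hasDerivAt_pow 2 v).div_const 2)).congr_deriv ?_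
    simp only [id]
    ring
  have hmono : MonotoneOn (fun v => (1 + v) * exp (-v) + v ^ 2 / 2) (Ici 0) :=
    monotoneOn_of_hasDerivWithinAt_nonneg (convex_Ici 0)
      (fun v _ => (hderiv v).continuousAt.continuousWithinAt)
      (fun v _ => (hderiv v).hasDerivWithinAt)
      (fun v hv => by
        rw [interior_Ici] at hv
        exact mul_nonneg hv.le (one_sub_exp_neg_nonneg hv.le))
  have h0u := hmono (mem_Ici.mpr le_rfl) hu hu
  simp only [add_zero, neg_zero, exp_zero, mul_one] at h0u
  linarith

noncomputable def expQuot (u : ℝ) : ℝ := (1 - exp (-u)) / u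

lemma expQuot_nonneg {u : ℝ} (hu : 0 ≤ u) : 0 ≤ expQuot u :=
  div_nonneg (one_sub_exp_neg_nonneg hu) hu

lemma expQuot_le_one {u : ℝ} (hu : 0 ≤ u) : expQuot u ≤ 1 := by
  rcases hu.eq_or_lt with rfl | hu
  · simp [expQuot]
  · exact (div_le_one hu).mpr (one_sub_exp_neg_le u)

lemma hasDerivAt_expQuot {u : ℝ} (hu : u ≠ 0) :
    HasDerivAt expQuot (((1 + u) * exp (-u) - 1) / u ^ 2) u := by
  refine (((hasDerivAt_neg u).exp.const_sub 1).div (hasDerivAt_id u) hu).congr_deriv ?_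
  simp only [id]
  ring

lemma antitoneOn_expQuot : AntitoneOn expQuot (Ioi 0) :=
  antitoneOn_of_hasDerivWithinAt_nonpos (convex_Ioi 0)
    (fun u hu => (hasDerivAt_expQuot (ne_of_gt hu)).continuousAt.continuousWithinAt)
    (fun u hu => (hasDerivAt_expQuot (ne_of_gt (interior_subset hu))).hasDerivWithinAt)
    (fun u _ => by
      refine div_nonpos_of_nonpos_of_nonneg ?_ (sq_nonneg u)
      have : (1 + u) * exp (-u) ≤ exp u * exp (-u) := by
        gcongr
        linarith [add_one_le_exp u]
      rw [← exp_add, add_neg_cancel, exp_zero] at this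
      linarith)

lemma monotoneOn_expQuot_add_half : MonotoneOn (fun u => expQuot u + u / 2) (Ioi 0) :=
  monotoneOn_of_hasDerivWithinAt_nonneg (convex_Ioi 0)
    (fun u hu => ((hasDerivAt_expQuot (ne_of_gt hu)).add
      ((hasDerivAt_id u).div_const 2)).continuousAt.continuousWithinAt)
    (fun u hu => ((hasDerivAt_expQuot (ne_of_gt (interior_subset hu))).add
      ((hasDerivAt_id u).div_const 2)).hasDerivWithinAt)
    (fun u hu => by
      rw [interior_Ioi, mem_Ioi] at hu
      have hu2 : 0 < u ^ 2 := by positivity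
      rw [div_add_div _ _ hu2.ne' two_ne_zero]
      have := one_sub_sq_div_two_le_add_one_mul_exp_neg hu.le
      refine div_nonneg ?_ (by positivity)
      nlinarith)

lemma expQuot_sub_le_half_sub {a c : ℝ} (ha : 0 < a) (hac : a ≤ c) :
    expQuot a - expQuot c ≤ (c - a) / 2 := by
  have := monotoneOn_expQuot_add_half ha (ha.trans_le hac) hac
  simp only at this
  linarith

lemma expQuot_sub_le_inv_sub {a c : ℝ} (ha : 0 < a) (hac : a ≤ c) :
    expQuot a - expQuot c ≤ a⁻¹ - c⁻¹ := by
  have hc := ha.trans_le hac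
  have : exp (-c) / c ≤ exp (-a) / a :=
    div_le_div₀ (exp_pos _).le (exp_le_exp.mpr (neg_le_neg hac)) ha hac
  simp only [expQuot, sub_div, one_div]
  linarith

lemma expQuot_sub_pow_twelve_le {a c : ℝ} (ha : 0 < a) (hac : a ≤ c) :
    (expQuot a - expQuot c) ^ 12 ≤ ((c - a) / 2) ^ 3 * (a⁻¹ - c⁻¹) := by
  have hc := ha.trans_le hac
  have h0 : 0 ≤ expQuot a - expQuot c := sub_nonneg.mpr (antitoneOn_expQuot ha hc hac)
  have h1 : expQuot a - expQuot c ≤ 1 := by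
    linarith [expQuot_le_one ha.le, expQuot_nonneg hc.le]
  calc (expQuot a - expQuot c) ^ 12
      = (expQuot a - expQuot c) ^ 8 * ((expQuot a - expQuot c) ^ 3 * (expQuot a - expQuot c)) := by
        ring
    _ ≤ 1 * (((c - a) / 2) ^ 3 * (a⁻¹ - c⁻¹)) := by
        gcongr ?_ * (?_ ^ 3 * ?_)
        · exact pow_le_one₀ h0 h1
        · exact expQuot_sub_le_half_sub ha hac
        · exact expQuot_sub_le_inv_sub ha hac
    _ = ((c - a) / 2) ^ 3 * (a⁻¹ - c⁻¹) := one_mul _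

lemma le_rpow_mul_rpow_of_pow_twelve_le {m h s : ℝ} (hh : 0 ≤ h) (hs : 0 ≤ s)
    (hm : m ^ 12 ≤ h ^ 4 / s ^ 2) : m ≤ h ^ (1 / 3 : ℝ) * s ^ (-1 / 6 : ℝ) := by
  rcases le_or_gt m 0 with hm0 | hm0
  · exact hm0.trans (by positivity)
  have hpow : (h ^ (1 / 3 : ℝ) * s ^ (-1 / 6 : ℝ)) ^ 12 = h ^ 4 / s ^ 2 := by
    rw [mul_pow, ← rpow_mul_natCast hh, ← rpow_mul_natCast hs]
    norm_num [div_eq_mul_inv]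
  exact (pow_le_pow_iff_left₀ hm0.le (by positivity) (by norm_num)).mp (hpow ▸ hm)

lemma one_sub_exp_neg_div_div_eq {s : ℝ} (hs : s ≠ 0) (u : ℝ) :
    (1 - exp (-u / s)) / u = expQuot (u / s) / s := by
  rw [expQuot, div_div, div_mul_cancel₀ _ hs, neg_div]

noncomputable def JIntegrand (x h s : ℝ) : ℝ :=
  √s * ((1 - exp (-x ^ 2 / s)) / x ^ 2 + (1 - exp (-(x + h) ^ 2 / s)) / (x + h) ^ 2 -
    2 * exp (-h ^ 2 / (4 * s)) * (1 - exp (-(x * (x + h)) / s)) / (x * (x + h)))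

lemma J_eq_integral_JIntegrand (t x h : ℝ) : J t x h = ∫ s in Ioc 0 t, JIntegrand x h s := rfl

lemma JIntegrand_le {x h s : ℝ} (hx : 0 < x) (hh : 0 < h) (hs : 0 < s) :
    JIntegrand x h s ≤ 3 * h ^ (1 / 3 : ℝ) * s ^ (-2 / 3 : ℝ) := by
  have hrw : JIntegrand x h s = √s / s * (expQuot (x ^ 2 / s) + expQuot ((x + h) ^ 2 / s) -
      2 * exp (-h ^ 2 / (4 * s)) * expQuot (x * (x + h) / s)) := by
    simp only [JIntegrand, mul_div_assoc, one_sub_exp_neg_div_div_eq hs.ne']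
    ring
  set a := x ^ 2 / s
  set b := (x + h) ^ 2 / s
  set c := x * (x + h) / s
  set E := exp (-h ^ 2 / (4 * s))
  set r := h ^ (1 / 3 : ℝ) * s ^ (-1 / 6 : ℝ)
  have ha : 0 < a := by positivity
  have hac : a ≤ c := by
    change x ^ 2 / s ≤ x * (x + h) / s
    gcongr
    nlinarith
  have hcb : c ≤ b := by
    change x * (x + h) / s ≤ (x + h) ^ 2 / s
    gcongr
    nlinarith
  have hc0 : 0 ≤ expQuot c := expQuot_nonneg (ha.trans_le hac).le
  have hc1 : expQuot c ≤ 1 := expQuot_le_one (ha.trans_le hac).le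
  have hbc : expQuot b ≤ expQuot c :=
    antitoneOn_expQuot (ha.trans_le hac) (ha.trans_le (hac.trans hcb)) hcb
  have hacr : expQuot a - expQuot c ≤ r := by
    have hprod : ((c - a) / 2) ^ 3 * (a⁻¹ - c⁻¹) = h ^ 4 / s ^ 2 * (x / (8 * (x + h))) := by
      simp only [a, c]
      field_simp
      ring
    refine le_rpow_mul_rpow_of_pow_twelve_le hh.le hs.le
      ((expQuot_sub_pow_twelve_le ha hac).trans (hprod.trans_le ?_))
    exact mul_le_of_le_one_right (by positivity) ((div_le_one (by positivity)).mpr (by linarith))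
  have hE0 : 0 ≤ 1 - E := by
    simpa [E, neg_div] using one_sub_exp_neg_nonneg (by positivity : 0 ≤ h ^ 2 / (4 * s))
  have hEr : 1 - E ≤ r := by
    have hE1 : 1 - E ≤ 1 := by linarith [exp_pos (-h ^ 2 / (4 * s))]
    have hEu : 1 - E ≤ h ^ 2 / (4 * s) := by
      simpa [E, neg_div] using one_sub_exp_neg_le (h ^ 2 / (4 * s))
    refine le_rpow_mul_rpow_of_pow_twelve_le hh.le hs.le ?_
    calc (1 - E) ^ 12 ≤ (1 - E) ^ 2 := pow_le_pow_of_le_one hE0 hE1 (by norm_num)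
      _ ≤ (h ^ 2 / (4 * s)) ^ 2 := by gcongr
      _ = h ^ 4 / s ^ 2 / 16 := by field_simp; ring
      _ ≤ h ^ 4 / s ^ 2 := by linarith [show 0 ≤ h ^ 4 / s ^ 2 by positivity]
  calc JIntegrand x h s = √s / s * (expQuot a + expQuot b - 2 * E * expQuot c) := hrw
    _ ≤ √s / s * (3 * r) := by
        gcongr
        nlinarith
    _ = 3 * h ^ (1 / 3 : ℝ) * s ^ (-2 / 3 : ℝ) := by
        have : √s / s * s ^ (-1 / 6 : ℝ) = s ^ (-2 / 3 : ℝ) := by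
          rw [sqrt_eq_rpow, ← rpow_sub_one hs.ne', ← rpow_add hs]
          norm_num
        linear_combination (3 * h ^ (1 / 3 : ℝ)) * this

/-- No integrability of `f` is needed: if `f` is not integrable, its integral is `0 ≤ ∫ g`. -/
lemma integral_mono_of_nonneg_right {α : Type*} [MeasurableSpace α] {μ : Measure α}
    {f g : α → ℝ} (hg : Integrable g μ) (hg0 : 0 ≤ᵐ[μ] g) (hfg : f ≤ᵐ[μ] g) :
    ∫ a, f a ∂μ ≤ ∫ a, g a ∂μ := by
  by_cases hf : Integrable f μ
  · exact integral_mono_ae hf hg hfg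
  · exact integral_undef hf ▸ integral_nonneg_of_ae hg0

lemma integral_Ioc_zero_rpow {r t : ℝ} (hr : -1 < r) (ht : 0 ≤ t) :
    ∫ s in Ioc 0 t, s ^ r = t ^ (r + 1) / (r + 1) := by
  rw [← intervalIntegral.integral_of_le ht, integral_rpow (Or.inl hr), zero_rpow (by linarith),
    sub_zero]

theorem J_holder_bound (T : ℝ) (hT : 0 < T) :
    ∃ C > 0, ∀ x h : ℝ, 0 < x → 0 < h → x ≤ 1 → x + h ≤ 1 →
      ∀ t ∈ Set.Ioc (0:ℝ) T, J t x h ≤ C * h ^ ((1:ℝ)/3) := by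
  refine ⟨9 * T ^ (1 / 3 : ℝ), by positivity, fun x h hx hh _ _ t ⟨ht0, htT⟩ => ?_⟩
  have hint : IntegrableOn (fun s : ℝ => s ^ (-2 / 3 : ℝ)) (Ioc 0 t) :=
    (intervalIntegral.intervalIntegrable_rpow' (by norm_num)).1
  calc J t x h ≤ ∫ s in Ioc 0 t, 3 * h ^ (1 / 3 : ℝ) * s ^ (-2 / 3 : ℝ) := by
        rw [J_eq_integral_JIntegrand]
        refine integral_mono_of_nonneg_right (hint.const_mul _) ?_ ?_ <;>
          filter_upwards [ae_restrict_mem measurableSet_Ioc] with s hs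
        · have := hs.1
          positivity
        · exact JIntegrand_le hx hh hs.1
    _ = 9 * t ^ (1 / 3 : ℝ) * h ^ (1 / 3 : ℝ) := by
        rw [integral_const_mul, integral_Ioc_zero_rpow (by norm_num) ht0.le]
        norm_num
        ring
    _ ≤ 9 * T ^ (1 / 3 : ℝ) * h ^ ((1 : ℝ) / 3) := by gcongr
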